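/- arXiv:2204.09631 — 3 statements merged into one kernel-verified Lean document; each statement's English description precedes it below -/
import Mathlib

section
/- Let c : ℝⁿ → ℝ be twice continuously differentiable with ½|dᵀ∇²c(x)d| ≤ H‖d‖² for all x, d. If d satisfies c(x) + ⟨∇c(x), d⟩ = 0, then for any β ∈ [0,1], |c(x + βd)| ≤ (1-β)|c(x)| + β²H‖d‖². -/
/-!
Restrict `c` to the segment from `x` to `x + β • d`. Taylor's formula with integral remainder
gives `c (x + β • d) = c x + β Dc(x) d + R` with `|R| ≤ β² H ‖d‖²`, and the linearized
equation turns the first-order part into `(1 - β) c x`.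
-/

open Set

theorem norm_sub_sub_fderiv_le_of_norm_iteratedFDeriv_two_le
    {E F : Type*} [NormedAddCommGroup E] [NormedSpace ℝ E]
    [NormedAddCommGroup F] [NormedSpace ℝ F] [CompleteSpace F]
    {f : E → F} (hf : ContDiff ℝ 2 f) (x y : E) {M : ℝ}
    (hM : ∀ t ∈ Icc (0 : ℝ) 1, ‖iteratedFDeriv ℝ 2 f (x + t • y) (fun _ ↦ y)‖ ≤ M) :
    ‖f (x + y) - f x - fderiv ℝ f x y‖ ≤ M / 2 := by
  have htaylor := map_add_eq_sum_add_integral_iteratedFDeriv (n := 1) (x := x) (y := y)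
    fun t _ ↦ hf.contDiffAt
  simp only [Finset.sum_range_succ, Finset.sum_range_zero, Nat.factorial_zero, Nat.factorial_one,
    Nat.cast_one, inv_one, Nat.reduceAdd, one_smul, zero_add, iteratedFDeriv_zero_apply,
    iteratedFDeriv_one_apply, pow_one] at htaylor
  rw [htaylor, add_assoc, add_sub_cancel_left, add_sub_cancel_left]
  calc ‖∫ t in (0 : ℝ)..1, (1 - t) • iteratedFDeriv ℝ 2 f (x + t • y) (fun _ ↦ y)‖
      ≤ ∫ t in (0 : ℝ)..1, (1 - t) * M := by
        refine intervalIntegral.norm_integral_le_of_norm_le zero_le_one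
          (Filter.Eventually.of_forall fun t ht ↦ ?_)
          ((by fun_prop : Continuous fun t : ℝ ↦ (1 - t) * M).intervalIntegrable _ _)
        rw [norm_smul, Real.norm_of_nonneg (sub_nonneg.2 ht.2)]
        exact mul_le_mul_of_nonneg_left (hM t (Ioc_subset_Icc_self ht)) (sub_nonneg.2 ht.2)
    _ = M / 2 := by
        rw [intervalIntegral.integral_mul_const, intervalIntegral.integral_sub
          intervalIntegrable_const intervalIntegral.intervalIntegrable_id]
        norm_num
        ring

theorem stmt5_general {n : ℕ} (c : EuclideanSpace ℝ (Fin n) → ℝ)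
    (hc : ContDiff ℝ 2 c) (H : ℝ)
    (hH : ∀ (y v : EuclideanSpace ℝ (Fin n)),
      1 / 2 * |iteratedFDeriv ℝ 2 c y ![v, v]| ≤ H * ‖v‖ ^ 2)
    (x d : EuclideanSpace ℝ (Fin n))
    (hlin : c x + fderiv ℝ c x d = 0)
    (β : ℝ) (hβ1 : β ≤ 1) :
    |c (x + β • d)| ≤ (1 - β) * |c x| + β ^ 2 * H * ‖d‖ ^ 2 := by
  have hremainder : |c (x + β • d) - c x - fderiv ℝ c x (β • d)| ≤ β ^ 2 * H * ‖d‖ ^ 2 := by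
    refine (norm_sub_sub_fderiv_le_of_norm_iteratedFDeriv_two_le hc x (β • d)
      (M := 2 * (β ^ 2 * H * ‖d‖ ^ 2)) fun t _ ↦ ?_).trans_eq (by ring)
    have hbound := hH (x + t • β • d) (β • d)
    rw [Matrix.vec_single_eq_const, Matrix.vecCons_const, norm_smul, mul_pow, Real.norm_eq_abs,
      sq_abs] at hbound
    rw [Real.norm_eq_abs]
    linarith
  have hfirst_order : c x + fderiv ℝ c x (β • d) = (1 - β) * c x := by
    rw [map_smul, smul_eq_mul]
    linear_combination β * hlin
  calc |c (x + β • d)|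
      = |(1 - β) * c x + (c (x + β • d) - c x - fderiv ℝ c x (β • d))| := by
        rw [← hfirst_order]; congr 1; ring
    _ ≤ |(1 - β) * c x| + |c (x + β • d) - c x - fderiv ℝ c x (β • d)| := abs_add_le _ _
    _ ≤ (1 - β) * |c x| + β ^ 2 * H * ‖d‖ ^ 2 := by
        rw [abs_mul, abs_of_nonneg (sub_nonneg.2 hβ1)]
        gcongr

/-- If `c` is C² with uniform Hessian bound `½|dᵀ∇²c(y)d| ≤ H‖d‖²` and `d` solves
the linearized equation `c(x) + Dc(x)[d] = 0`, then for `β ∈ [0,1]`: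
`|c(x + β•d)| ≤ (1-β)|c(x)| + β²H‖d‖²`. -/
theorem stmt5 {n : ℕ} (c : EuclideanSpace ℝ (Fin n) → ℝ)
    (hc : ContDiff ℝ 2 c) (H : ℝ) (hH0 : 0 ≤ H)
    (hH : ∀ (y v : EuclideanSpace ℝ (Fin n)),
      1 / 2 * |iteratedFDeriv ℝ 2 c y ![v, v]| ≤ H * ‖v‖ ^ 2)
    (x d : EuclideanSpace ℝ (Fin n))
    (hlin : c x + fderiv ℝ c x d = 0)
    (β : ℝ) (hβ0 : 0 ≤ β) (hβ1 : β ≤ 1) :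
    |c (x + β • d)| ≤ (1 - β) * |c x| + β ^ 2 * H * ‖d‖ ^ 2 :=
  stmt5_general c hc H hH x d hlin β hβ1
end

section
/- Let c : ℝⁿ → ℝ^m be C² with each component satisfying ½|dᵀ∇²c_j(x)d| ≤ H‖d‖². Suppose d satisfies c(x) + ∇c(x)ᵀd = 0 componentwise. Then ‖c(x + βd)‖₁ ≤ (1-β)‖c(x)‖₁ + mβ²H‖d‖² for β ∈ [0,1]. -/
/-!
Along the segment `t ↦ x + t • d`, the Hessian bound makes `t ↦ Dc_j(x + t • d) d` Lipschitz with
constant `2H‖d‖²`, so the first-order Taylor remainder of `c_j` at `β` is at most `Hβ²‖d‖²`. Since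
`d` solves the linearized system, the first-order Taylor polynomial is `(1 - β) c_j(x)`; summing
the resulting bounds over the `m` components gives the estimate.
-/

section Taylor

variable {E F : Type*} [NormedAddCommGroup E] [NormedSpace ℝ E]
  [NormedAddCommGroup F] [NormedSpace ℝ F] {f : E → F}

theorem hasDerivAt_comp_add_smul (hf : Differentiable ℝ f) (x d : E) (t : ℝ) :
    HasDerivAt (fun s : ℝ => f (x + s • d)) (fderiv ℝ f (x + t • d) d) t := by
  have hline : HasDerivAt (fun s : ℝ => x + s • d) d t := by
    simpa using ((hasDerivAt_id t).smul_const d).const_add x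
  exact (hf _).hasFDerivAt.comp_hasDerivAt t hline

theorem norm_fderiv_add_smul_sub_le (hf : ContDiff ℝ 2 f) {K : ℝ}
    (hK : ∀ y v, ‖iteratedFDeriv ℝ 2 f y ![v, v]‖ ≤ K * ‖v‖ ^ 2) (x d : E) {t : ℝ}
    (ht : 0 ≤ t) :
    ‖fderiv ℝ f (x + t • d) d - fderiv ℝ f x d‖ ≤ K * ‖d‖ ^ 2 * t := by
  have hDf : Differentiable ℝ (fderiv ℝ f) :=
    (hf.fderiv_right (le_refl _)).differentiable one_ne_zero
  have hderiv : ∀ s : ℝ, HasDerivAt (fun s : ℝ => fderiv ℝ f (x + s • d) d)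
      (fderiv ℝ (fderiv ℝ f) (x + s • d) d d) s := fun s =>
    (hasDerivAt_comp_add_smul hDf x d s).clm_apply (hasDerivAt_const s d) |>.congr_deriv
      (by simp)
  have hbound : ∀ s : ℝ, ‖fderiv ℝ (fderiv ℝ f) (x + s • d) d d‖ ≤ K * ‖d‖ ^ 2 := fun s => by
    simpa [iteratedFDeriv_two_apply] using hK (x + s • d) d
  simpa using norm_image_sub_le_of_norm_deriv_le_segment'
    (fun s _ => (hderiv s).hasDerivWithinAt) (fun s _ => hbound s) t ⟨ht, le_rfl⟩

theorem norm_sub_sub_fderiv_le_of_norm_iteratedFDeriv_two_le_s6 (hf : ContDiff ℝ 2 f) {K : ℝ}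
    (hK : ∀ y v, ‖iteratedFDeriv ℝ 2 f y ![v, v]‖ ≤ K * ‖v‖ ^ 2) (x d : E) {β : ℝ}
    (hβ : 0 ≤ β) :
    ‖f (x + β • d) - f x - β • fderiv ℝ f x d‖ ≤ K / 2 * β ^ 2 * ‖d‖ ^ 2 := by
  have hf1 : Differentiable ℝ f := hf.differentiable two_ne_zero
  set r : ℝ → F := fun t => f (x + t • d) - f x - t • fderiv ℝ f x d
  have hr : ∀ t, HasDerivAt r (fderiv ℝ f (x + t • d) d - fderiv ℝ f x d) t := fun t =>
    ((hasDerivAt_comp_add_smul hf1 x d t).sub_const (f x)).sub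
      (by simpa using (hasDerivAt_id t).smul_const (fderiv ℝ f x d))
  have hB : ∀ t : ℝ, HasDerivAt (fun t : ℝ => K / 2 * ‖d‖ ^ 2 * t ^ 2) (K * ‖d‖ ^ 2 * t) t :=
    fun t => ((hasDerivAt_pow 2 t).const_mul _).congr_deriv (by norm_num; ring)
  have hfence := image_norm_le_of_norm_deriv_right_le_deriv_boundary (a := 0) (b := β)
    (fun t _ => (hr t).continuousAt.continuousWithinAt) (fun t _ => (hr t).hasDerivWithinAt)
    (by simp [r]) hB (fun t ht => norm_fderiv_add_smul_sub_le hf hK x d ht.1)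
    ⟨hβ, le_rfl⟩
  simpa [r, mul_right_comm] using hfence

end Taylor

theorem abs_add_smul_le_of_add_fderiv_eq_zero {E : Type*} [NormedAddCommGroup E] [NormedSpace ℝ E]
    {f : E → ℝ} (hf : ContDiff ℝ 2 f) {H : ℝ}
    (hH : ∀ y v, 1 / 2 * |iteratedFDeriv ℝ 2 f y ![v, v]| ≤ H * ‖v‖ ^ 2) {x d : E}
    (hlin : f x + fderiv ℝ f x d = 0) {β : ℝ} (hβ0 : 0 ≤ β) (hβ1 : β ≤ 1) :
    |f (x + β • d)| ≤ (1 - β) * |f x| + β ^ 2 * H * ‖d‖ ^ 2 := by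
  have hK : ∀ y v, ‖iteratedFDeriv ℝ 2 f y ![v, v]‖ ≤ 2 * H * ‖v‖ ^ 2 := fun y v => by
    rw [Real.norm_eq_abs]; linarith [hH y v]
  have htaylor := norm_sub_sub_fderiv_le_of_norm_iteratedFDeriv_two_le_s6 hf hK x d hβ0
  rw [Real.norm_eq_abs, smul_eq_mul, eq_neg_of_add_eq_zero_right hlin] at htaylor
  have hsplit : f (x + β • d) - f x - β * -f x = f (x + β • d) - (1 - β) * f x := by ring
  rw [hsplit] at htaylor
  have htriangle := abs_sub_abs_le_abs_sub (f (x + β • d)) ((1 - β) * f x)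
  rw [abs_mul, abs_of_nonneg (sub_nonneg.2 hβ1)] at htriangle
  linarith

theorem stmt6_general {n m : ℕ} (c : Fin m → EuclideanSpace ℝ (Fin n) → ℝ)
    (hc : ∀ j, ContDiff ℝ 2 (c j)) (H : ℝ)
    (hH : ∀ j, ∀ (y v : EuclideanSpace ℝ (Fin n)),
      1 / 2 * |iteratedFDeriv ℝ 2 (c j) y ![v, v]| ≤ H * ‖v‖ ^ 2)
    (x d : EuclideanSpace ℝ (Fin n))
    (hlin : ∀ j, c j x + fderiv ℝ (c j) x d = 0)
    (β : ℝ) (hβ0 : 0 ≤ β) (hβ1 : β ≤ 1) :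
    ∑ j, |c j (x + β • d)| ≤ (1 - β) * ∑ j, |c j x| + m * β ^ 2 * H * ‖d‖ ^ 2 := by
  calc ∑ j, |c j (x + β • d)| ≤ ∑ j, ((1 - β) * |c j x| + β ^ 2 * H * ‖d‖ ^ 2) :=
        Finset.sum_le_sum fun j _ =>
          abs_add_smul_le_of_add_fderiv_eq_zero (hc j) (hH j) (hlin j) hβ0 hβ1
    _ = (1 - β) * ∑ j, |c j x| + m * β ^ 2 * H * ‖d‖ ^ 2 := by
        simp only [Finset.sum_add_distrib, Finset.sum_const, ← Finset.mul_sum, Finset.card_univ,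
          Fintype.card_fin, nsmul_eq_mul]
        ring

/-- For `c : ℝⁿ → ℝ^m` C² componentwise with uniform Hessian bound `H`, if `d`
solves the linearized system `c_j(x) + Dc_j(x)[d] = 0` for all `j`, then
`‖c(x+β•d)‖₁ ≤ (1-β)‖c(x)‖₁ + mβ²H‖d‖²` for `β ∈ [0,1]`. -/
theorem stmt6 {n m : ℕ} (c : Fin m → EuclideanSpace ℝ (Fin n) → ℝ)
    (hc : ∀ j, ContDiff ℝ 2 (c j)) (H : ℝ) (hH0 : 0 ≤ H)
    (hH : ∀ j, ∀ (y v : EuclideanSpace ℝ (Fin n)),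
      1 / 2 * |iteratedFDeriv ℝ 2 (c j) y ![v, v]| ≤ H * ‖v‖ ^ 2)
    (x d : EuclideanSpace ℝ (Fin n))
    (hlin : ∀ j, c j x + fderiv ℝ (c j) x d = 0)
    (β : ℝ) (hβ0 : 0 ≤ β) (hβ1 : β ≤ 1) :
    ∑ j, |c j (x + β • d)| ≤ (1 - β) * ∑ j, |c j x| + m * β ^ 2 * H * ‖d‖ ^ 2 :=
  stmt6_general c hc H hH x d hlin β hβ0 hβ1
end

section
/- Let g, d ∈ ℝⁿ, α > 0, and suppose the KKT stationarity g + αd = A λ + ζ_l - ζ_u holds with complementarity Z_l(d - d_l) = 0, Z_u(d - d_u) = 0, where d_l = -x, d_u = x_u - x, and x ≥ 0, x_u - x ≥ 0 componentwise (after the step: x + d ≥ 0, x_u - x - d ≥ 0), ζ_l, ζ_u ≥ 0, and Aᵀd = -c (the linearized feasibility ⟨∇c_j(x), d⟩ = -c_j(x)). Then -⟨g, d⟩ - α‖d‖² ≥ ⟨λ, c⟩. -/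
open scoped RealInnerProductSpace

/-- From the KKT stationarity `g + α•d = ∑_j λ_j ∇c_j + ζ_l - ζ_u`, complementarity
of the bound multipliers, the sign/bound conditions, and linearized feasibility
`⟪∇c_j, d⟫ = -c_j`, it follows that `-⟪g,d⟫ - α‖d‖² ≥ ⟨λ, c⟩`. -/
theorem stmt9 {n m : ℕ} (g d x xu ζl ζu : EuclideanSpace ℝ (Fin n))
    (a : Fin m → EuclideanSpace ℝ (Fin n)) (lam c : Fin m → ℝ) (α : ℝ) (hα : 0 < α)
    (hstat : g + α • d = ∑ j, lam j • a j + ζl - ζu)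
    (hcompl : ∀ i, ζl i * (x i + d i) = 0)
    (hcompu : ∀ i, ζu i * (xu i - x i - d i) = 0)
    (hζl : ∀ i, 0 ≤ ζl i) (hζu : ∀ i, 0 ≤ ζu i)
    (hx0 : ∀ i, 0 ≤ x i) (hxu : ∀ i, x i ≤ xu i)
    (hxd0 : ∀ i, 0 ≤ x i + d i) (hxdu : ∀ i, x i + d i ≤ xu i)
    (hfeas : ∀ j, ⟪a j, d⟫ = -c j) :
    -⟪g, d⟫ - α * ‖d‖ ^ 2 ≥ ∑ j, lam j * c j := by
  have key : ⟪g, d⟫ + α * ‖d‖ ^ 2 =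
      (∑ j, lam j * (-c j)) + ⟪ζl, d⟫ - ⟪ζu, d⟫ := by
    have h1 : ⟪g + α • d, d⟫ = ⟪(∑ j, lam j • a j) + ζl - ζu, d⟫ := by rw [hstat]
    rw [inner_add_left, inner_smul_left, real_inner_self_eq_norm_sq] at h1
    rw [inner_sub_left, inner_add_left, sum_inner] at h1
    simp only [inner_smul_left, RCLike.star_def, starRingEnd_apply, star_trivial] at h1 ⊢
    rw [h1]
    congr 1; congr 1
    exact Finset.sum_congr rfl fun j _ => by rw [hfeas j]
  have hl : ⟪ζl, d⟫ ≤ 0 := by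
    rw [PiLp.inner_apply]
    apply Finset.sum_nonpos
    intro i _
    simp only [RCLike.inner_apply, starRingEnd_apply, star_trivial]
    have := hcompl i
    nlinarith [hζl i, hx0 i]
  have hu : 0 ≤ ⟪ζu, d⟫ := by
    rw [PiLp.inner_apply]
    apply Finset.sum_nonneg
    intro i _
    simp only [RCLike.inner_apply, starRingEnd_apply, star_trivial]
    have := hcompu i
    nlinarith [hζu i, hxu i]
  have : ∑ j, lam j * c j = -(∑ j, lam j * (-c j)) := by
    simp [Finset.sum_neg_distrib]
  linarith [key]
end
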